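/- Let p be a prime with p ≡ 3 (mod 4). Then 4·binomial((p-3)/2,(p-3)/4)²·t_{(p-3)/4}² ≡ 1 (mod p), where (t_n) is the sequence defined below; consequently t_{(p-3)/4} ≡ ±binomial((p-1)/2,(p-3)/4)^{-1} (mod p) for one of the two signs. -/
import Mathlib


/-- The sequence `t_0 = 1`, `t_1 = 5`,
`t_{n+1} = (8n²+12n+5) t_n - 4n²(2n+1)² t_{n-1}` for `n ≥ 1`. -/
def t : ℕ → ℤ
  | 0 => 1
  | 1 => 5
  | (n + 2) => (8 * ((n : ℤ) + 1) ^ 2 + 12 * ((n : ℤ) + 1) + 5) * t (n + 1)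
      - 4 * ((n : ℤ) + 1) ^ 2 * (2 * ((n : ℤ) + 1) + 1) ^ 2 * t n

/-- `a ≡ b (mod p^r)` for rationals: `a - b` is `p^r` times a rational whose
denominator (in lowest terms) is not divisible by `p`. -/
def pcong (p r : ℕ) (a b : ℚ) : Prop :=
  ∃ q : ℚ, a - b = (p : ℚ) ^ r * q ∧ ¬ (p ∣ q.den)

open Nat Finset

lemma t_rec1 (n : ℕ) :
    t (n + 1) = 4 * ((n : ℤ) + 1) ^ 2 * t n + ((2 * n + 1)‼ : ℤ) ^ 2 := by
  induction n with
  | zero => simp [t, Nat.doubleFactorial]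
  | succ n ih =>
    have hd : ((2 * (n + 1) + 1)‼ : ℤ) = (2 * (n : ℤ) + 3) * ((2 * n + 1)‼ : ℤ) := by
      have h : 2 * (n + 1) + 1 = (2 * n + 1) + 2 := by ring
      rw [h, Nat.doubleFactorial_add_two]
      push_cast; ring
    show t (n + 2) = _
    rw [show t (n + 2) = (8 * ((n : ℤ) + 1) ^ 2 + 12 * ((n : ℤ) + 1) + 5) * t (n + 1)
      - 4 * ((n : ℤ) + 1) ^ 2 * (2 * ((n : ℤ) + 1) + 1) ^ 2 * t n from rfl, hd]
    push_cast
    linear_combination (2 * (n : ℤ) + 3) ^ 2 * ih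

-- basic facts in K = ZMod p
lemma two_ne (p n₀ : ℕ) (hp : p.Prime) (hpn : p = 4 * n₀ + 3) : (2 : ZMod p) ≠ 0 := by
  haveI : Fact p.Prime := ⟨hp⟩
  have : ((2 : ℕ) : ZMod p) ≠ 0 := by
    rw [Ne, ZMod.natCast_eq_zero_iff]
    intro h
    have := Nat.le_of_dvd (by norm_num) h
    omega
  simpa using this

lemma cast_lt_ne (p : ℕ) (hp : p.Prime) (k : ℕ) (hk : 0 < k) (hkp : k < p) : ((k : ℕ) : ZMod p) ≠ 0 := by
  rw [Ne, ZMod.natCast_eq_zero_iff]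
  intro h
  have := Nat.le_of_dvd hk h
  omega

lemma two_m_eq (p n₀ : ℕ) (hpn : p = 4 * n₀ + 3) : (2 : ZMod p) * ((2 * n₀ + 1 : ℕ) : ZMod p) = -1 := by
  have h0 : ((p : ℕ) : ZMod p) = 0 := ZMod.natCast_self p
  have : ((4 * n₀ + 2 : ℕ) : ZMod p) + 1 = 0 := by
    rw [← Nat.cast_one (R := ZMod p), ← Nat.cast_add, show 4 * n₀ + 2 + 1 = p by omega, h0]
  push_cast at this ⊢
  linear_combination this

lemma cb_eq (p n₀ : ℕ) (hp : p.Prime) (hpn : p = 4 * n₀ + 3) :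
    ∀ k, k ≤ 2 * n₀ + 1 →
      ((Nat.centralBinom k : ℕ) : ZMod p) = (-4) ^ k * (((2 * n₀ + 1).choose k : ℕ) : ZMod p) := by
  haveI : Fact p.Prime := ⟨hp⟩
  intro k
  induction k with
  | zero => intro _; simp [Nat.centralBinom]
  | succ k ih =>
    intro hk1
    have hk : k ≤ 2 * n₀ + 1 := by omega
    have IH := ih hk
    have hkne : ((k : ZMod p) + 1) ≠ 0 := by
      have := cast_lt_ne p hp (k + 1) (by omega) (by omega)
      push_cast at this; exact this
    have e1 : ((k : ZMod p) + 1) * ((Nat.centralBinom (k + 1) : ℕ) : ZMod p)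
        = 2 * (2 * (k : ZMod p) + 1) * ((Nat.centralBinom k : ℕ) : ZMod p) := by
      have := Nat.succ_mul_centralBinom_succ k
      have h2 := congrArg (fun x : ℕ => (x : ZMod p)) this
      push_cast at h2
      linear_combination h2
    have e2 : (((2 * n₀ + 1).choose (k + 1) : ℕ) : ZMod p) * ((k : ZMod p) + 1)
        = (((2 * n₀ + 1).choose k : ℕ) : ZMod p) * (((2 * n₀ + 1 : ℕ) : ZMod p) - (k : ZMod p)) := by
      have := Nat.choose_succ_right_eq (2 * n₀ + 1) k
      have h2 := congrArg (fun x : ℕ => (x : ZMod p)) this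
      push_cast [Nat.cast_sub hk] at h2
      push_cast
      linear_combination h2
    have e3 := two_m_eq p n₀ hpn
    apply mul_left_cancel₀ hkne
    rw [e1]
    push_cast at e2 e3 ⊢
    linear_combination 2 * (2 * (k : ZMod p) + 1) * IH - (-4) ^ (k + 1) * e2
      + 2 * (-4) ^ k * (((2 * n₀ + 1).choose k : ℕ) : ZMod p) * e3

lemma choose_p1 (p : ℕ) (hp : p.Prime) : ∀ j, j ≤ p - 1 → (((p - 1).choose j : ℕ) : ZMod p) = (-1) ^ j := by
  haveI : Fact p.Prime := ⟨hp⟩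
  have hp1 : 1 ≤ p := hp.one_lt.le
  intro j
  induction j with
  | zero => intro _; simp
  | succ j ih =>
    intro hj1
    have pascal : (p - 1).choose j + (p - 1).choose (j + 1) = p.choose (j + 1) := by
      rw [show p = (p - 1) + 1 by omega, Nat.choose_succ_succ]
      simp [show (p-1)+1-1 = p-1 by omega]
    have hdvd : p ∣ p.choose (j + 1) :=
      hp.dvd_choose_self (by omega) (by omega)
    have hz : ((p.choose (j + 1) : ℕ) : ZMod p) = 0 := by
      rw [ZMod.natCast_eq_zero_iff]; exact hdvd
    have hc := congrArg (fun x : ℕ => (x : ZMod p)) pascal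
    push_cast at hc
    rw [hz] at hc
    have := ih (by omega)
    rw [pow_succ]
    linear_combination hc - this

lemma sum_sq_choose (N : ℕ) :
    ∑ k ∈ range (N + 1), N.choose k * N.choose k = (2 * N).choose N := by
  rw [two_mul, Nat.add_choose_eq]
  rw [Finset.Nat.sum_antidiagonal_eq_sum_range_succ_mk]
  apply Finset.sum_congr rfl
  intro k hk
  rw [Finset.mem_range] at hk
  rw [Nat.choose_symm (by omega)]

lemma halving (p n₀ : ℕ) :
    ∑ k ∈ range (2 * n₀ + 2), (((2 * n₀ + 1).choose k : ℕ) : ZMod p) ^ 2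
      = 2 * ∑ k ∈ range (n₀ + 1), (((2 * n₀ + 1).choose k : ℕ) : ZMod p) ^ 2 := by
  have hsplit := Finset.sum_range_add
    (fun k => (((2 * n₀ + 1).choose k : ℕ) : ZMod p) ^ 2) (n₀ + 1) (n₀ + 1)
  rw [show 2 * n₀ + 2 = (n₀ + 1) + (n₀ + 1) by ring, hsplit]
  have h2 : ∀ k ∈ range (n₀ + 1),
      (((2 * n₀ + 1).choose (n₀ + 1 + k) : ℕ) : ZMod p) ^ 2
        = (((2 * n₀ + 1).choose (n₀ - k) : ℕ) : ZMod p) ^ 2 := by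
    intro k hk
    rw [Finset.mem_range] at hk
    have : (2 * n₀ + 1).choose (n₀ + 1 + k) = (2 * n₀ + 1).choose (n₀ - k) := by
      rw [show n₀ - k = (2 * n₀ + 1) - (n₀ + 1 + k) by omega]
      exact (Nat.choose_symm (by omega)).symm
    rw [this]
  rw [Finset.sum_congr rfl h2]
  have hr := Finset.sum_range_reflect
    (fun k => (((2 * n₀ + 1).choose k : ℕ) : ZMod p) ^ 2) (n₀ + 1)
  simp only [Nat.add_sub_cancel] at hr
  rw [hr]
  ring

lemma sum_val (p n₀ : ℕ) (hp : p.Prime) (hpn : p = 4 * n₀ + 3) :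
    2 * ∑ k ∈ range (n₀ + 1), (((2 * n₀ + 1).choose k : ℕ) : ZMod p) ^ 2 = -1 := by
  rw [← halving p n₀]
  have hnat : ∑ k ∈ range (2 * n₀ + 2), (2 * n₀ + 1).choose k * (2 * n₀ + 1).choose k
      = (2 * (2 * n₀ + 1)).choose (2 * n₀ + 1) := sum_sq_choose (2 * n₀ + 1)
  have hc := congrArg (fun x : ℕ => (x : ZMod p)) hnat
  push_cast at hc
  have hs : ∑ k ∈ range (2 * n₀ + 2), (((2 * n₀ + 1).choose k : ℕ) : ZMod p) ^ 2
      = (((2 * (2 * n₀ + 1)).choose (2 * n₀ + 1) : ℕ) : ZMod p) := by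
    rw [← hc]; apply Finset.sum_congr rfl; intro k _; ring
  rw [hs, show 2 * (2 * n₀ + 1) = p - 1 by omega]
  rw [choose_p1 p hp (2 * n₀ + 1) (by omega)]
  rw [pow_succ, pow_mul]
  norm_num

lemma wilson_half (p n₀ : ℕ) (hp : p.Prime) (hpn : p = 4 * n₀ + 3) :
    (((2 * n₀ + 1)! : ℕ) : ZMod p) ^ 2 = 1 := by
  haveI : Fact p.Prime := ⟨hp⟩
  have hw : (((p - 1)! : ℕ) : ZMod p) = -1 := ZMod.wilsons_lemma p
  have hsplit : ((p - 1)! : ZMod p)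
      = (((2 * n₀ + 1)! : ℕ) : ZMod p) * ∏ i ∈ range (2 * n₀ + 1), (((2 * n₀ + 1) + i + 1 : ℕ) : ZMod p) := by
    rw [← Finset.prod_range_add_one_eq_factorial (2 * n₀ + 1),
      show p - 1 = (2 * n₀ + 1) + (2 * n₀ + 1) by omega,
      ← Finset.prod_range_add_one_eq_factorial ((2 * n₀ + 1) + (2 * n₀ + 1))]
    push_cast
    rw [Finset.prod_range_add (fun i => ((i : ZMod p) + 1)) (2 * n₀ + 1) (2 * n₀ + 1)]
    congr 1
    apply Finset.prod_congr rfl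
    intro x _
    push_cast
    ring
  have hneg : ∀ i ∈ range (2 * n₀ + 1),
      (((2 * n₀ + 1) + i + 1 : ℕ) : ZMod p) = -(((2 * n₀ + 1 - i : ℕ)) : ZMod p) := by
    intro i hi
    rw [Finset.mem_range] at hi
    have hsum : ((2 * n₀ + 1) + i + 1) + (2 * n₀ + 1 - i) = p := by omega
    have := congrArg (fun x : ℕ => (x : ZMod p)) hsum
    push_cast at this
    rw [ZMod.natCast_self] at this
    push_cast
    linear_combination this
  rw [Finset.prod_congr rfl hneg] at hsplit
  have hneg2 : ∏ i ∈ range (2 * n₀ + 1), (-(((2 * n₀ + 1 - i : ℕ)) : ZMod p))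
      = (-1) ^ (2 * n₀ + 1) * ∏ i ∈ range (2 * n₀ + 1), (((2 * n₀ + 1 - i : ℕ)) : ZMod p) := by
    have hd := Finset.prod_mul_distrib (s := range (2 * n₀ + 1))
      (f := fun _ => (-1 : ZMod p)) (g := fun i => (((2 * n₀ + 1 - i : ℕ)) : ZMod p))
    simp only [Finset.prod_const, Finset.card_range] at hd
    rw [← hd]
    apply Finset.prod_congr rfl
    intro i _
    ring
  have hrefl : ∏ i ∈ range (2 * n₀ + 1), (((2 * n₀ + 1 - i : ℕ)) : ZMod p)
      = (((2 * n₀ + 1)! : ℕ) : ZMod p) := by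
    rw [← Finset.prod_range_add_one_eq_factorial (2 * n₀ + 1)]
    push_cast
    have step : ∀ i ∈ range (2 * n₀ + 1),
        (((2 * n₀ + 1 - i : ℕ)) : ZMod p) = ((2 * n₀ + 1 - 1 - i : ℕ) : ZMod p) + 1 := by
      intro i hi
      rw [Finset.mem_range] at hi
      have : (2 * n₀ + 1 - i) = (2 * n₀ + 1 - 1 - i) + 1 := by omega
      rw [this]
      push_cast
      ring
    rw [Finset.prod_congr rfl step]
    exact Finset.prod_range_reflect (fun j => ((j : ZMod p) + 1)) (2 * n₀ + 1)
  rw [hneg2, hrefl, Odd.neg_one_pow ⟨n₀, by ring⟩] at hsplit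
  rw [hw] at hsplit
  linear_combination hsplit

lemma dblfact_nat (j : ℕ) : (2 * j + 1)‼ * 2 ^ (j + 1) = Nat.centralBinom (j + 1) * (j + 1)! := by
  have h1 : Nat.centralBinom (j + 1) * (j + 1)! * (j + 1)! = (2 * (j + 1))! := by
    have := Nat.choose_mul_factorial_mul_factorial (n := 2 * (j + 1)) (k := j + 1) (by omega)
    rw [show 2 * (j + 1) - (j + 1) = j + 1 by omega] at this
    simpa [Nat.centralBinom] using this
  have h2 : (2 * (j + 1))! = (2 * (j + 1))‼ * (2 * j + 1)‼ := by
    rw [show 2 * (j + 1) = (2 * j + 1) + 1 by ring]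
    exact Nat.factorial_eq_mul_doubleFactorial (2 * j + 1)
  have h3 : (2 * (j + 1))‼ = 2 ^ (j + 1) * (j + 1)! := Nat.doubleFactorial_two_mul (j + 1)
  apply Nat.eq_of_mul_eq_mul_right (Nat.factorial_pos (j + 1))
  calc (2 * j + 1)‼ * 2 ^ (j + 1) * (j + 1)! = (2 * (j + 1))‼ * (2 * j + 1)‼ := by rw [h3]; ring
    _ = (2 * (j + 1))! := h2.symm
    _ = Nat.centralBinom (j + 1) * (j + 1)! * (j + 1)! := h1.symm

lemma dbl_sq (p n₀ : ℕ) (hp : p.Prime) (hpn : p = 4 * n₀ + 3) (j : ℕ) (hj : j + 1 ≤ n₀) :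
    (((2 * j + 1)‼ : ℕ) : ZMod p) ^ 2
      = 4 ^ (j + 1) * (((j + 1)! : ℕ) : ZMod p) ^ 2 * (((2 * n₀ + 1).choose (j + 1) : ℕ) : ZMod p) ^ 2 := by
  haveI : Fact p.Prime := ⟨hp⟩
  have h2 := two_ne p n₀ hp hpn
  have h4 : ((4 : ZMod p)) ^ (j + 1) ≠ 0 := by
    apply pow_ne_zero
    rw [show (4 : ZMod p) = 2 * 2 by norm_num]
    exact mul_ne_zero h2 h2
  have hcast := congrArg (fun x : ℕ => (x : ZMod p)) (dblfact_nat j)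
  push_cast at hcast
  have hcb := cb_eq p n₀ hp hpn (j + 1) (by omega)
  have e1 : (2 : ZMod p) ^ (j + 1) * 2 ^ (j + 1) = 4 ^ (j + 1) := by
    rw [← mul_pow]; norm_num
  have e2 : ((-4 : ZMod p)) ^ (j + 1) * (-4) ^ (j + 1) = 4 ^ (j + 1) * 4 ^ (j + 1) := by
    rw [← mul_pow, ← mul_pow]; norm_num
  apply mul_left_cancel₀ h4
  have hsq : ((((2 * j + 1)‼ : ℕ) : ZMod p) * 2 ^ (j + 1)) * ((((2 * j + 1)‼ : ℕ) : ZMod p) * 2 ^ (j + 1))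
      = (((Nat.centralBinom (j + 1) : ℕ) : ZMod p) * (((j + 1)! : ℕ) : ZMod p))
        * (((Nat.centralBinom (j + 1) : ℕ) : ZMod p) * (((j + 1)! : ℕ) : ZMod p)) := by
    rw [hcast]
  linear_combination hsq - (((2 * j + 1)‼ : ℕ) : ZMod p) ^ 2 * e1
    + (((j + 1)! : ℕ) : ZMod p) ^ 2 * (((Nat.centralBinom (j + 1) : ℕ) : ZMod p)
        + (-4) ^ (j + 1) * (((2 * n₀ + 1).choose (j + 1) : ℕ) : ZMod p)) * hcb
    + (((j + 1)! : ℕ) : ZMod p) ^ 2 * (((2 * n₀ + 1).choose (j + 1) : ℕ) : ZMod p) ^ 2 * e2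

lemma key (p n₀ : ℕ) (hp : p.Prime) (hpn : p = 4 * n₀ + 3) :
    ∀ j, j ≤ n₀ → ((t j : ℤ) : ZMod p)
      = 4 ^ j * ((j ! : ℕ) : ZMod p) ^ 2
        * ∑ k ∈ range (j + 1), (((2 * n₀ + 1).choose k : ℕ) : ZMod p) ^ 2 := by
  intro j
  induction j with
  | zero => intro _; simp [t]
  | succ j ih =>
    intro hj1
    have IH := ih (by omega)
    have r := congrArg (fun x : ℤ => (x : ZMod p)) (t_rec1 j)
    push_cast at r
    have d := dbl_sq p n₀ hp hpn j (by omega)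
    have f : (((j + 1)! : ℕ) : ZMod p) = ((j : ZMod p) + 1) * ((j ! : ℕ) : ZMod p) := by
      rw [Nat.factorial_succ]; push_cast; ring
    rw [Finset.sum_range_succ]
    push_cast at d f ⊢
    linear_combination r + 4 * ((j : ZMod p) + 1) ^ 2 * IH + d
      - 4 ^ (j + 1) * (∑ k ∈ range (j + 1), (((2 * n₀ + 1).choose k : ℕ) : ZMod p) ^ 2)
        * ((((j + 1)! : ℕ) : ZMod p) + ((j : ZMod p) + 1) * ((j ! : ℕ) : ZMod p)) * f

lemma final_sq (p n₀ : ℕ) (hp : p.Prime) (hpn : p = 4 * n₀ + 3) :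
    4 * (((2 * n₀).choose n₀ : ℕ) : ZMod p) ^ 2 * ((t n₀ : ℤ) : ZMod p) ^ 2 = 1 := by
  haveI : Fact p.Prime := ⟨hp⟩
  have h2 := two_ne p n₀ hp hpn
  have hk := key p n₀ hp hpn n₀ le_rfl
  have hs := sum_val p n₀ hp hpn
  have hm := two_m_eq p n₀ hpn
  have hSM : ∑ k ∈ range (n₀ + 1), (((2 * n₀ + 1).choose k : ℕ) : ZMod p) ^ 2
      = ((2 * n₀ + 1 : ℕ) : ZMod p) := mul_left_cancel₀ h2 (hs.trans hm.symm)
  have hC1c : (((2 * n₀).choose n₀ : ℕ) : ZMod p) * ((n₀ ! : ℕ) : ZMod p) * ((n₀ ! : ℕ) : ZMod p)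
      = (((2 * n₀)! : ℕ) : ZMod p) := by
    have := Nat.choose_mul_factorial_mul_factorial (n := 2 * n₀) (k := n₀) (by omega)
    rw [show 2 * n₀ - n₀ = n₀ by omega] at this
    exact_mod_cast congrArg (fun x : ℕ => (x : ZMod p)) this
  have hW := wilson_half p n₀ hp hpn
  have hWs : (((2 * n₀ + 1 : ℕ) : ZMod p) * (((2 * n₀)! : ℕ) : ZMod p)) ^ 2 = 1 := by
    have : ((2 * n₀ + 1)! : ℕ) = (2 * n₀ + 1) * (2 * n₀)! := Nat.factorial_succ (2 * n₀)
    rw [this] at hW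
    push_cast at hW ⊢
    linear_combination hW
  have hF : (4 : ZMod p) ^ (2 * n₀ + 1) = 1 := by
    have h2F : (2 : ZMod p) ^ (p - 1) = 1 := ZMod.pow_card_sub_one_eq_one h2
    calc (4 : ZMod p) ^ (2 * n₀ + 1) = 2 ^ (2 * n₀ + 1) * 2 ^ (2 * n₀ + 1) := by
          rw [← mul_pow]; norm_num
      _ = 2 ^ ((2 * n₀ + 1) + (2 * n₀ + 1)) := (pow_add _ _ _).symm
      _ = 2 ^ (p - 1) := by congr 1; omega
      _ = 1 := h2F
  calc 4 * (((2 * n₀).choose n₀ : ℕ) : ZMod p) ^ 2 * ((t n₀ : ℤ) : ZMod p) ^ 2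
      = 4 ^ (2 * n₀ + 1) * (((2 * n₀ + 1 : ℕ) : ZMod p)
          * ((((2 * n₀).choose n₀ : ℕ) : ZMod p) * ((n₀ ! : ℕ) : ZMod p) * ((n₀ ! : ℕ) : ZMod p))) ^ 2 := by
        rw [hk, hSM]; ring
    _ = 4 ^ (2 * n₀ + 1) * (((2 * n₀ + 1 : ℕ) : ZMod p) * (((2 * n₀)! : ℕ) : ZMod p)) ^ 2 := by
        rw [hC1c]
    _ = 1 := by rw [hWs, hF, mul_one]

lemma c2_eq (p n₀ : ℕ) (hp : p.Prime) (hpn : p = 4 * n₀ + 3) :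
    (((2 * n₀ + 1).choose n₀ : ℕ) : ZMod p) = -2 * (((2 * n₀).choose n₀ : ℕ) : ZMod p) := by
  have hnat : (2 * n₀ + 1) * (2 * n₀).choose n₀ = (2 * n₀ + 1).choose n₀ * (n₀ + 1) := by
    have h1 := Nat.add_one_mul_choose_eq (2 * n₀) n₀
    rw [Nat.choose_symm_half n₀] at h1
    simpa using h1
  have e1 := congrArg (fun x : ℕ => (x : ZMod p)) hnat
  push_cast at e1
  have e2 : (4 : ZMod p) * ((n₀ : ZMod p) + 1) = 1 := by
    have : ((4 * n₀ + 4 : ℕ) : ZMod p) = ((p : ℕ) : ZMod p) + 1 := by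
      rw [show (4 * n₀ + 4) = p + 1 by omega]; push_cast; ring
    rw [ZMod.natCast_self] at this
    push_cast at this
    linear_combination this
  have e3 := two_m_eq p n₀ hpn
  push_cast at e3
  linear_combination -4 * e1 - (((2 * n₀ + 1).choose n₀ : ℕ) : ZMod p) * e2
    + 2 * (((2 * n₀).choose n₀ : ℕ) : ZMod p) * e3

theorem t_quarter_cong (p : ℕ) (hp : p.Prime) (hp4 : p % 4 = 3) :
    pcong p 1
      (4 * ((((p - 3) / 2).choose ((p - 3) / 4) : ℚ)) ^ 2 * (t ((p - 3) / 4) : ℚ) ^ 2) 1 ∧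
    (pcong p 1 ((t ((p - 3) / 4) : ℚ))
        (((((p - 1) / 2).choose ((p - 3) / 4) : ℚ))⁻¹) ∨
      pcong p 1 ((t ((p - 3) / 4) : ℚ))
        (-((((p - 1) / 2).choose ((p - 3) / 4) : ℚ))⁻¹)) := by
  haveI : Fact p.Prime := ⟨hp⟩
  have hp3 : 3 ≤ p := by
    rcases Nat.lt_or_ge p 3 with h | h
    · interval_cases p <;> omega
    · exact h
  obtain ⟨n₀, hpn⟩ : ∃ n₀, p = 4 * n₀ + 3 := ⟨p / 4, by omega⟩
  have e2 : (p - 3) / 2 = 2 * n₀ := by omega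
  have e4 : (p - 3) / 4 = n₀ := by omega
  have e1 : (p - 1) / 2 = 2 * n₀ + 1 := by omega
  rw [e2, e4, e1]
  have hsq := final_sq p n₀ hp hpn
  constructor
  · have hdvd : (p : ℤ) ∣ 4 * ((2 * n₀).choose n₀ : ℤ) ^ 2 * (t n₀) ^ 2 - 1 := by
      rw [← ZMod.intCast_zmod_eq_zero_iff_dvd]
      push_cast
      push_cast at hsq
      linear_combination hsq
    obtain ⟨c, hc⟩ := hdvd
    refine ⟨(c : ℚ), ?_, ?_⟩
    · have hq := congrArg (fun z : ℤ => (z : ℚ)) hc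
      push_cast at hq
      rw [pow_one]
      linear_combination hq
    · rw [Rat.den_intCast]
      intro hd
      exact hp.one_lt.ne' (Nat.dvd_one.mp hd)
  · set C2 : ℕ := (2 * n₀ + 1).choose n₀ with hC2def
    have hc2 := c2_eq p n₀ hp hpn
    have hx : ((C2 : ℕ) : ZMod p) ^ 2 * ((t n₀ : ℤ) : ZMod p) ^ 2 = 1 := by
      linear_combination ((t n₀ : ℤ) : ZMod p) ^ 2
          * (((C2 : ℕ) : ZMod p) - 2 * (((2 * n₀).choose n₀ : ℕ) : ZMod p)) * hc2 + hsq
    have hC2ne : ((C2 : ℕ) : ZMod p) ≠ 0 := by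
      intro h
      rw [h] at hx
      simp at hx
    have hpC2 : ¬ (p ∣ C2) := by
      rw [← ZMod.natCast_eq_zero_iff] at *
      exact hC2ne
    have hC2Q : ((C2 : ℕ) : ℚ) ≠ 0 :=
      Nat.cast_ne_zero.mpr (Nat.choose_pos (by omega)).ne'
    have hcases : ((C2 : ℕ) : ZMod p) * ((t n₀ : ℤ) : ZMod p) = 1
        ∨ ((C2 : ℕ) : ZMod p) * ((t n₀ : ℤ) : ZMod p) = -1 := by
      have hze : (((C2 : ℕ) : ZMod p) * ((t n₀ : ℤ) : ZMod p) - 1)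
          * (((C2 : ℕ) : ZMod p) * ((t n₀ : ℤ) : ZMod p) + 1) = 0 := by
        linear_combination hx
      rcases mul_eq_zero.mp hze with h | h
      · left; linear_combination h
      · right; linear_combination h
    have hdenq : ∀ c : ℤ, ¬ (p ∣ ((c : ℚ) / ((C2 : ℕ) : ℚ)).den) := by
      intro c hpd
      apply hpC2
      have hdd : (((c : ℚ) / ((C2 : ℕ) : ℚ)).den : ℤ) ∣ ((C2 : ℕ) : ℤ) := by
        have : ((c : ℚ) / ((C2 : ℕ) : ℚ)) = Rat.divInt c ((C2 : ℕ) : ℤ) := by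
          rw [Rat.divInt_eq_div]; push_cast; ring
        rw [this]
        exact Rat.den_dvd c ((C2 : ℕ) : ℤ)
      have hdn : ((c : ℚ) / ((C2 : ℕ) : ℚ)).den ∣ C2 := by exact_mod_cast hdd
      exact hpd.trans hdn
    rcases hcases with h | h
    · left
      have hdvd : (p : ℤ) ∣ (C2 : ℤ) * t n₀ - 1 := by
        rw [← ZMod.intCast_zmod_eq_zero_iff_dvd]
        push_cast
        push_cast at h
        linear_combination h
      obtain ⟨c, hc⟩ := hdvd
      refine ⟨(c : ℚ) / ((C2 : ℕ) : ℚ), ?_, hdenq c⟩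
      have hq := congrArg (fun z : ℤ => (z : ℚ)) hc
      push_cast at hq
      rw [pow_one]
      field_simp
      linear_combination hq
    · right
      have hdvd : (p : ℤ) ∣ (C2 : ℤ) * t n₀ + 1 := by
        rw [← ZMod.intCast_zmod_eq_zero_iff_dvd]
        push_cast
        push_cast at h
        linear_combination h
      obtain ⟨c, hc⟩ := hdvd
      refine ⟨(c : ℚ) / ((C2 : ℕ) : ℚ), ?_, hdenq c⟩
      have hq := congrArg (fun z : ℤ => (z : ℚ)) hc
      push_cast at hq
      rw [pow_one]
      field_simp
      linear_combination hq
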